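/- arXiv:1604.00945 — 6 statements merged into one kernel-verified Lean document; each statement's English description precedes it below -/
import Mathlib

section
/- For each fixed θ ∈ (0,∞), the map β ↦ Λ(β,θ) := Γ(θ+1)·Γ((1+βθ)/(1−β)) / Γ((1+θ)/(1−β)) is strictly decreasing on (0,1). -/
noncomputable def Lam (β θ : ℝ) : ℝ :=
  Real.Gamma (θ + 1) * Real.Gamma ((1 + β * θ) / (1 - β)) / Real.Gamma ((1 + θ) / (1 - β))

open Real

private lemma keyle (θ : ℝ) (hθ : 0 < θ) {x y : ℝ} (hx : 0 < x) (hxy : x ≤ y) :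
    log (Gamma (x + θ)) + log (Gamma y) ≤ log (Gamma x) + log (Gamma (y + θ)) := by
  rcases eq_or_lt_of_le hxy with rfl | hlt
  · linarith
  · set t := θ / (y + θ - x) with ht
    have hd : 0 < y + θ - x := by linarith
    have ht0 : 0 ≤ t := by positivity
    have ht1 : 0 ≤ 1 - t := by
      rw [sub_nonneg, ht, div_le_one hd]; linarith
    have hc := Real.convexOn_log_Gamma.2
    have hxm : x ∈ Set.Ioi (0:ℝ) := Set.mem_Ioi.mpr hx
    have hym : y + θ ∈ Set.Ioi (0:ℝ) := Set.mem_Ioi.mpr (by linarith)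
    have h1 := hc hxm hym ht1 ht0 (by ring)
    have h2 := hc hxm hym ht0 ht1 (by ring)
    have e1 : (1 - t) • x + t • (y + θ) = x + θ := by
      simp only [smul_eq_mul, ht]; field_simp; ring
    have e2 : t • x + (1 - t) • (y + θ) = y := by
      simp only [smul_eq_mul, ht]; field_simp; ring
    rw [e1] at h1
    rw [e2] at h2
    simp only [Function.comp, smul_eq_mul] at h1 h2
    linarith

private lemma keylt (θ : ℝ) (hθ : 0 < θ) {x y : ℝ} (hx : 0 < x) (hxy : x < y) :
    log (Gamma (x + θ)) + log (Gamma y) < log (Gamma x) + log (Gamma (y + θ)) := by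
  refine lt_of_le_of_ne (keyle θ hθ hx hxy.le) (fun hE => ?_)
  have hy : 0 < y := hx.trans hxy
  have key2 := keyle θ hθ (by linarith : (0:ℝ) < x + 1) (by linarith : x + 1 ≤ y + 1)
  have hxθ : 0 < x + θ := by linarith
  have hyθ : 0 < y + θ := by linarith
  have g1 : Gamma (x + 1 + θ) = (x + θ) * Gamma (x + θ) := by
    rw [show x + 1 + θ = (x + θ) + 1 by ring, Real.Gamma_add_one hxθ.ne']
  have g2 : Gamma (y + 1) = y * Gamma y := Real.Gamma_add_one hy.ne'
  have g3 : Gamma (x + 1) = x * Gamma x := Real.Gamma_add_one hx.ne'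
  have g4 : Gamma (y + 1 + θ) = (y + θ) * Gamma (y + θ) := by
    rw [show y + 1 + θ = (y + θ) + 1 by ring, Real.Gamma_add_one hyθ.ne']
  rw [g1, g2, g3, g4, Real.log_mul hxθ.ne' (Real.Gamma_pos_of_pos hxθ).ne',
    Real.log_mul hy.ne' (Real.Gamma_pos_of_pos hy).ne',
    Real.log_mul hx.ne' (Real.Gamma_pos_of_pos hx).ne',
    Real.log_mul hyθ.ne' (Real.Gamma_pos_of_pos hyθ).ne'] at key2
  have hlog : log (x + θ) + log y ≤ log x + log (y + θ) := by linarith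
  rw [← Real.log_mul hxθ.ne' hy.ne', ← Real.log_mul hx.ne' hyθ.ne'] at hlog
  have : (x + θ) * y ≤ x * (y + θ) :=
    (Real.log_le_log_iff (by positivity) (by positivity)).mp hlog
  nlinarith

theorem lam_strictAnti_beta (θ : ℝ) (hθ : 0 < θ) :
    StrictAntiOn (fun β => Lam β θ) (Set.Ioo 0 1) := by
  intro β₁ hβ₁ β₂ hβ₂ h12
  obtain ⟨hb1, hb1'⟩ := hβ₁
  obtain ⟨hb2, hb2'⟩ := hβ₂
  set a₁ := (1 + β₁ * θ) / (1 - β₁) with ha1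
  set a₂ := (1 + β₂ * θ) / (1 - β₂) with ha2
  have h1m : (0:ℝ) < 1 - β₁ := by linarith
  have h2m : (0:ℝ) < 1 - β₂ := by linarith
  have ha1pos : 0 < a₁ := by positivity
  have ha2pos : 0 < a₂ := by positivity
  have haa : a₁ < a₂ := by
    rw [ha1, ha2, div_lt_div_iff₀ h1m h2m]
    nlinarith
  have e1 : (1 + θ) / (1 - β₁) = a₁ + θ := by
    rw [ha1]; field_simp; ring
  have e2 : (1 + θ) / (1 - β₂) = a₂ + θ := by
    rw [ha2]; field_simp; ring
  have hG1 : 0 < Gamma a₁ := Real.Gamma_pos_of_pos ha1pos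
  have hG2 : 0 < Gamma a₂ := Real.Gamma_pos_of_pos ha2pos
  have hG1θ : 0 < Gamma (a₁ + θ) := Real.Gamma_pos_of_pos (by linarith)
  have hG2θ : 0 < Gamma (a₂ + θ) := Real.Gamma_pos_of_pos (by linarith)
  have hGθ : 0 < Gamma (θ + 1) := Real.Gamma_pos_of_pos (by linarith)
  have hP : Gamma (a₁ + θ) * Gamma a₂ < Gamma a₁ * Gamma (a₂ + θ) := by
    have hlt := keylt θ hθ ha1pos haa
    rw [← Real.log_mul hG1θ.ne' hG2.ne', ← Real.log_mul hG1.ne' hG2θ.ne'] at hlt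
    exact (Real.log_lt_log_iff (by positivity) (by positivity)).mp hlt
  simp only [Lam, e1, e2]
  rw [div_lt_div_iff₀ hG2θ hG1θ]
  nlinarith [mul_lt_mul_of_pos_left hP hGθ]
end

section
/- For each fixed β ∈ (0,1), the map θ ↦ Λ(β,θ) := Γ(θ+1)·Γ((1+βθ)/(1−β)) / Γ((1+θ)/(1−β)) is strictly decreasing on (0,∞). -/
open Real Set

/-- `log ∘ Γ` is strictly convex on `(0, ∞)`. -/
lemma strictConvexOn_logGamma :
    StrictConvexOn ℝ (Set.Ioi 0) (fun x : ℝ => Real.log (Real.Gamma x)) := by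
  have h1 : ConvexOn ℝ (Set.Ioi 0) (fun x : ℝ => Real.log (Real.Gamma (x + 1))) := by
    refine ⟨convex_Ioi 0, fun x hx y hy a b ha hb hab => ?_⟩
    have hx1 : x + 1 ∈ Set.Ioi (0:ℝ) := by simp at hx ⊢; linarith
    have hy1 : y + 1 ∈ Set.Ioi (0:ℝ) := by simp at hy ⊢; linarith
    have := Real.convexOn_log_Gamma.2 hx1 hy1 ha hb hab
    simp only [Function.comp_apply, smul_eq_mul] at this ⊢
    have e : a * (x + 1) + b * (y + 1) = a * x + b * y + 1 := by linear_combination (x+y+1)*0 + hab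
    rwa [e] at this
  have h2 : StrictConvexOn ℝ (Set.Ioi 0) (fun x : ℝ => -Real.log x) :=
    strictConcaveOn_log_Ioi.neg
  have h3 := h1.add_strictConvexOn h2
  have key : ∀ z ∈ Set.Ioi (0:ℝ),
      Real.log (Real.Gamma z) = Real.log (Real.Gamma (z + 1)) + -Real.log z := by
    intro z hz
    rw [Real.Gamma_add_one (ne_of_gt hz),
      Real.log_mul (ne_of_gt hz) (Real.Gamma_pos_of_pos hz).ne']
    ring
  refine ⟨convex_Ioi 0, fun x hx y hy hne a b ha hb hab => ?_⟩
  have hmem : a • x + b • y ∈ Set.Ioi (0:ℝ) := (convex_Ioi 0) hx hy ha.le hb.le hab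
  have h := h3.2 hx hy hne ha hb hab
  simp only [Pi.add_apply, smul_eq_mul] at h ⊢
  rw [key x hx, key y hy, key (a * x + b * y) (by simpa using hmem)]
  simpa using h

/-- Increments of a strictly convex function are strictly increasing. -/
lemma strictConvexOn_increment {s : Set ℝ} {f : ℝ → ℝ} (hf : StrictConvexOn ℝ s f)
    {x y d : ℝ} (hx : x ∈ s) (hy : y ∈ s) (hyd : y + d ∈ s)
    (hxy : x < y) (hd : 0 < d) :
    f (x + d) - f x < f (y + d) - f y := by
  have h1 : (f (x + d) - f x) / (x + d - x) < (f (y + d) - f x) / (y + d - x) :=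
    hf.secant_strict_mono_aux2 hx hyd (by linarith) (by linarith)
  have h2 : (f (y + d) - f x) / (y + d - x) < (f (y + d) - f y) / (y + d - y) :=
    hf.secant_strict_mono_aux3 hx hyd hxy (by linarith)
  have h3 := h1.trans h2
  rw [add_sub_cancel_left, add_sub_cancel_left, div_lt_div_iff₀ hd hd] at h3
  nlinarith [h3]

theorem lam_strictAnti_theta (β : ℝ) (hβ0 : 0 < β) (hβ1 : β < 1) :
    StrictAntiOn (fun θ => Lam β θ) (Set.Ioi 0) := by
  intro θ₁ hθ₁ θ₂ hθ₂ hlt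
  simp only [Set.mem_Ioi] at hθ₁ hθ₂
  have h1β : (0:ℝ) < 1 - β := by linarith
  set c : ℝ := (1 - β)⁻¹ with hc_def
  have hc0 : 0 < c := inv_pos.mpr h1β
  have hc : c * (1 - β) = 1 := inv_mul_cancel₀ h1β.ne'
  have hc1 : 1 < c := by nlinarith
  set f : ℝ → ℝ := fun x => Real.log (Real.Gamma x) with hf_def
  set d : ℝ := θ₂ - θ₁ with hd_def
  have hd : 0 < d := by simp [hd_def]; linarith
  -- memberships
  have m1 : θ₁ + 1 ∈ Set.Ioi (0:ℝ) := by simp; linarith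
  have m2 : c * (1 + θ₁) ∈ Set.Ioi (0:ℝ) := by simp; nlinarith
  have m3 : c * (1 + θ₁) + d ∈ Set.Ioi (0:ℝ) := by simp at m2 ⊢; linarith
  have m4 : c * (1 + β * θ₁) ∈ Set.Ioi (0:ℝ) := by simp; nlinarith
  have m5 : c * (1 + θ₁) + d + c * β * d ∈ Set.Ioi (0:ℝ) := by
    simp at m3 ⊢; nlinarith
  -- first increment comparison
  have A : f (θ₂ + 1) - f (θ₁ + 1) < f (c * (1 + θ₁) + d) - f (c * (1 + θ₁)) := by
    have e : θ₂ + 1 = θ₁ + 1 + d := by simp [hd_def]; ring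
    rw [e]
    exact strictConvexOn_increment strictConvexOn_logGamma m1 m2 m3 (by nlinarith) hd
  -- second increment comparison
  have B : f (c * (1 + β * θ₂)) - f (c * (1 + β * θ₁))
      < f (c * (1 + θ₂)) - f (c * (1 + θ₁) + d) := by
    have e1 : c * (1 + β * θ₂) = c * (1 + β * θ₁) + c * β * d := by simp [hd_def]; ring
    have e2 : c * (1 + θ₂) = c * (1 + θ₁) + d + c * β * d := by
      have h' : c - c * β = 1 := by linear_combination hc
      simp [hd_def]; linear_combination (θ₂ - θ₁) * h'
    rw [e1, e2]
    exact strictConvexOn_increment strictConvexOn_logGamma m4 m3 m5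
      (by nlinarith) (by positivity)
  -- log of Lam
  have hlog : ∀ θ : ℝ, 0 < θ →
      Real.log (Lam β θ) = f (θ + 1) + f (c * (1 + β * θ)) - f (c * (1 + θ)) := by
    intro θ hθ
    have p1 : 0 < Real.Gamma (θ + 1) := Real.Gamma_pos_of_pos (by linarith)
    have p2 : 0 < Real.Gamma (c * (1 + β * θ)) := Real.Gamma_pos_of_pos (by nlinarith)
    have p3 : 0 < Real.Gamma (c * (1 + θ)) := Real.Gamma_pos_of_pos (by nlinarith)
    have e2 : (1 + β * θ) / (1 - β) = c * (1 + β * θ) := by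
      rw [div_eq_mul_inv, mul_comm]
    have e3 : (1 + θ) / (1 - β) = c * (1 + θ) := by
      rw [div_eq_mul_inv, mul_comm]
    rw [Lam, e2, e3, Real.log_div (by positivity) p3.ne', Real.log_mul p1.ne' p2.ne']
  have hLam_pos : ∀ θ : ℝ, 0 < θ → 0 < Lam β θ := by
    intro θ hθ
    have e2 : (0:ℝ) < (1 + β * θ) / (1 - β) := by positivity
    have e3 : (0:ℝ) < (1 + θ) / (1 - β) := by positivity
    have := Real.Gamma_pos_of_pos (by linarith : (0:ℝ) < θ + 1)
    have := Real.Gamma_pos_of_pos e2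
    have := Real.Gamma_pos_of_pos e3
    rw [Lam]; positivity
  have hloglt : Real.log (Lam β θ₂) < Real.log (Lam β θ₁) := by
    rw [hlog θ₁ hθ₁, hlog θ₂ hθ₂]
    linarith [A, B]
  exact (Real.log_lt_log_iff (hLam_pos θ₂ hθ₂) (hLam_pos θ₁ hθ₁)).mp hloglt
end

section
/- For each fixed β ∈ (0,1), Λ(β,θ) → 0 as θ → ∞, where Λ(β,θ) := Γ(θ+1)·Γ((1+βθ)/(1−β)) / Γ((1+θ)/(1−β)). -/
open Real Filter Set Topology

theorem Real.Gamma_mul_Gamma_eq_Gamma_add_mul_integral {a b : ℝ} (ha : 0 < a) (hb : 0 < b) :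
    Gamma a * Gamma b = Gamma (a + b) * ∫ t in (0 : ℝ)..1, t ^ (a - 1) * (1 - t) ^ (b - 1) := by
  have h := Complex.Gamma_mul_Gamma_eq_betaIntegral (s := (a : ℂ)) (t := (b : ℂ))
    (by simpa using ha) (by simpa using hb)
  have hB : Complex.betaIntegral a b
      = ((∫ t in (0 : ℝ)..1, t ^ (a - 1) * (1 - t) ^ (b - 1) : ℝ) : ℂ) := by
    rw [Complex.betaIntegral, ← intervalIntegral.integral_ofReal]
    refine intervalIntegral.integral_congr fun t ht => ?_
    rw [uIcc_of_le zero_le_one] at ht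
    rw [Complex.ofReal_mul, Complex.ofReal_cpow ht.1, Complex.ofReal_cpow (by linarith [ht.2])]
    push_cast
    ring
  rw [hB, ← Complex.ofReal_add, Complex.Gamma_ofReal, Complex.Gamma_ofReal,
    Complex.Gamma_ofReal, ← Complex.ofReal_mul, ← Complex.ofReal_mul] at h
  exact_mod_cast h

theorem rpow_mul_one_sub_rpow_le {w t : ℝ} (hw0 : 0 < w) (hw1 : w < 1) (ht0 : 0 ≤ t)
    (ht1 : t ≤ 1) : t ^ w * (1 - t) ^ (1 - w) ≤ w ^ w * (1 - w) ^ (1 - w) := by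
  have hw1' : 0 < 1 - w := by linarith
  -- weighted AM-GM for `t / w` and `(1 - t) / (1 - w)`, whose weighted mean is `1`
  have hamgm : (t / w) ^ w * ((1 - t) / (1 - w)) ^ (1 - w)
      ≤ w * (t / w) + (1 - w) * ((1 - t) / (1 - w)) :=
    geom_mean_le_arith_mean2_weighted hw0.le hw1'.le (by positivity)
      (div_nonneg (by linarith) hw1'.le) (by ring)
  rw [div_rpow ht0 hw0.le, div_rpow (by linarith) hw1'.le, div_mul_div_comm,
    mul_div_cancel₀ _ hw0.ne', mul_div_cancel₀ _ hw1'.ne', add_sub_cancel,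
    div_le_one (by positivity)] at hamgm
  exact hamgm

theorem mul_one_sub_rpow_le {β t : ℝ} (hβ0 : 0 < β) (hβ1 : β < 1) (ht0 : 0 ≤ t) (ht1 : t ≤ 1) :
    t * (1 - t) ^ (β / (1 - β)) ≤ (1 - β) * β ^ (β / (1 - β)) := by
  have hβ1' : 0 < 1 - β := by linarith
  have h := rpow_mul_one_sub_rpow_le hβ1' (by linarith) ht0 ht1
  rw [sub_sub_cancel] at h
  have hpow (x y : ℝ) (hx : 0 ≤ x) (hy : 0 ≤ y) :
      (x ^ (1 - β) * y ^ β) ^ (1 / (1 - β)) = x * y ^ (β / (1 - β)) := by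
    rw [mul_rpow (by positivity) (by positivity), ← rpow_mul hx, ← rpow_mul hy,
      mul_one_div_cancel hβ1'.ne', rpow_one, mul_one_div]
  rw [← hpow t (1 - t) ht0 (by linarith), ← hpow (1 - β) β hβ1'.le hβ0.le]
  exact rpow_le_rpow (by positivity) h (by positivity)

theorem Lam_eq_mul_integral {β θ : ℝ} (hβ0 : 0 ≤ β) (hβ1 : β < 1) (hθ : 0 ≤ θ) :
    Lam β θ = (1 + θ) / (1 - β) *
      ∫ t in (0 : ℝ)..1, t ^ θ * (1 - t) ^ (β / (1 - β) * (1 + θ)) := by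
  have hβ1' : 0 < 1 - β := by linarith
  have hc : 0 < (1 + θ) / (1 - β) := by positivity
  have hBeta := Gamma_mul_Gamma_eq_Gamma_add_mul_integral (a := θ + 1)
    (b := (1 + β * θ) / (1 - β)) (by linarith) (by positivity)
  have hsum : θ + 1 + (1 + β * θ) / (1 - β) = (1 + θ) / (1 - β) + 1 := by
    field_simp; ring
  have hexp : (1 + β * θ) / (1 - β) - 1 = β / (1 - β) * (1 + θ) := by
    field_simp; ring
  rw [Lam, hBeta, hsum, Gamma_add_one hc.ne', add_sub_cancel_right, hexp]
  field_simp [(Gamma_pos_of_pos hc).ne']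

theorem rpow_mul_one_sub_rpow_le_rpow {β θ t : ℝ} (hβ0 : 0 < β) (hβ1 : β < 1) (hθ : 0 ≤ θ)
    (ht0 : 0 ≤ t) (ht1 : t ≤ 1) :
    t ^ θ * (1 - t) ^ (β / (1 - β) * (1 + θ)) ≤ ((1 - β) * β ^ (β / (1 - β))) ^ θ := by
  have hm : 0 ≤ β / (1 - β) := div_nonneg hβ0.le (by linarith)
  calc t ^ θ * (1 - t) ^ (β / (1 - β) * (1 + θ))
      ≤ t ^ θ * (1 - t) ^ (β / (1 - β) * θ) := by
        refine mul_le_mul_of_nonneg_left ?_ (by positivity)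
        exact rpow_le_rpow_of_exponent_ge' (by linarith) (by linarith) (by positivity)
          (by nlinarith)
    _ = (t * (1 - t) ^ (β / (1 - β))) ^ θ := by
        rw [mul_rpow ht0 (by positivity), ← rpow_mul (by linarith)]
    _ ≤ ((1 - β) * β ^ (β / (1 - β))) ^ θ :=
        rpow_le_rpow (by positivity) (mul_one_sub_rpow_le hβ0 hβ1 ht0 ht1) hθ

theorem integral_rpow_mul_one_sub_rpow_le {β θ : ℝ} (hβ0 : 0 < β) (hβ1 : β < 1) (hθ : 0 ≤ θ) :
    ∫ t in (0 : ℝ)..1, t ^ θ * (1 - t) ^ (β / (1 - β) * (1 + θ))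
      ≤ ((1 - β) * β ^ (β / (1 - β))) ^ θ := by
  have hm : 0 ≤ β / (1 - β) * (1 + θ) := by
    have : 0 ≤ β / (1 - β) := div_nonneg hβ0.le (by linarith)
    positivity
  have hcont : ContinuousOn (fun t : ℝ => t ^ θ * (1 - t) ^ (β / (1 - β) * (1 + θ)))
      (uIcc 0 1) :=
    (continuousOn_id.rpow_const fun _ _ => Or.inr hθ).mul
      ((continuousOn_const.sub continuousOn_id).rpow_const fun _ _ => Or.inr hm)
  calc ∫ t in (0 : ℝ)..1, t ^ θ * (1 - t) ^ (β / (1 - β) * (1 + θ))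
      ≤ ∫ _ in (0 : ℝ)..1, ((1 - β) * β ^ (β / (1 - β))) ^ θ :=
        intervalIntegral.integral_mono_on zero_le_one hcont.intervalIntegrable
          intervalIntegrable_const fun t ht =>
            rpow_mul_one_sub_rpow_le_rpow hβ0 hβ1 hθ ht.1 ht.2
    _ = ((1 - β) * β ^ (β / (1 - β))) ^ θ := by simp

theorem tendsto_one_add_mul_rpow_atTop_nhds_zero {r : ℝ} (hr0 : 0 < r) (hr1 : r < 1) :
    Tendsto (fun θ : ℝ => (1 + θ) * r ^ θ) atTop (𝓝 0) := by
  have hb : 0 < -log r := neg_pos.mpr (log_neg hr0 hr1)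
  have hsum := (tendsto_rpow_mul_exp_neg_mul_atTop_nhds_zero 0 _ hb).add
    (tendsto_rpow_mul_exp_neg_mul_atTop_nhds_zero 1 _ hb)
  rw [add_zero] at hsum
  refine hsum.congr fun θ => ?_
  rw [rpow_zero, rpow_one, rpow_def_of_pos hr0, neg_neg, mul_comm (log r)]
  ring

theorem Lam_nonneg {β θ : ℝ} (hβ0 : 0 ≤ β) (hβ1 : β < 1) (hθ : 0 ≤ θ) : 0 ≤ Lam β θ := by
  have hβ1' : 0 < 1 - β := by linarith
  unfold Lam
  have := Gamma_pos_of_pos (show 0 < θ + 1 by linarith)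
  have := Gamma_pos_of_pos (show 0 < (1 + β * θ) / (1 - β) by positivity)
  have := Gamma_pos_of_pos (show 0 < (1 + θ) / (1 - β) by positivity)
  positivity

theorem lam_tendsto_zero_theta (β : ℝ) (hβ0 : 0 < β) (hβ1 : β < 1) :
    Filter.Tendsto (fun θ => Lam β θ) Filter.atTop (nhds 0) := by
  set r := (1 - β) * β ^ (β / (1 - β))
  have hr0 : 0 < r := mul_pos (by linarith) (rpow_pos_of_pos hβ0 _)
  have hr1 : r < 1 := by
    have : β ^ (β / (1 - β)) ≤ 1 := rpow_le_one hβ0.le hβ1.le (div_nonneg hβ0.le (by linarith))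
    nlinarith
  have hupper : ∀ θ, 0 ≤ θ → Lam β θ ≤ (1 + θ) * r ^ θ / (1 - β) := fun θ hθ =>
    calc Lam β θ ≤ (1 + θ) / (1 - β) * r ^ θ := by
          rw [Lam_eq_mul_integral hβ0.le hβ1 hθ]
          gcongr
          exact integral_rpow_mul_one_sub_rpow_le hβ0 hβ1 hθ
      _ = (1 + θ) * r ^ θ / (1 - β) := by ring
  have hlim := (tendsto_one_add_mul_rpow_atTop_nhds_zero hr0 hr1).div_const (1 - β)
  rw [zero_div] at hlim
  exact tendsto_of_tendsto_of_tendsto_of_le_of_le' tendsto_const_nhds hlim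
    ((eventually_ge_atTop 0).mono fun θ hθ => Lam_nonneg hβ0.le hβ1 hθ)
    ((eventually_ge_atTop 0).mono hupper)
end

section
/- Let a : [0,∞) → (0,∞) be continuous with a ∈ RV_∞(ρ), ρ ≥ 0, and a(t) → ∞; let b : [0,∞) → (0,∞) be continuous with b ∈ RV_∞(σ), σ ≥ 0, and if σ = 0 assume additionally that b is asymptotically increasing with b(t) → ∞. Then ∫₀ᵗ a(s)·b(t−s) ds / (t·a(t)·b(t)) → B(ρ+1, σ+1) as t → ∞, where B is the Beta function. -/
set_option maxHeartbeats 2000000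

open Filter MeasureTheory Set

/-- `h` is regularly varying at infinity with index `ρ`. -/
def RegVary (h : ℝ → ℝ) (ρ : ℝ) : Prop :=
  ∀ l : ℝ, 0 < l →
    Filter.Tendsto (fun x => h (l * x) / h x) Filter.atTop (nhds (l ^ ρ))

/-- Auxiliary lemma for the uniform convergence theorem: the sets of "good shifts"
eventually have measure bigger than 3/2. -/
lemma uct_aux (k : ℝ → ℝ) (hk : Continuous k) (c : ℕ → ℝ)
    (hs : ∀ s : ℝ, Tendsto (fun m : ℕ => k (c m + s) - k (c m)) atTop (nhds 0))
    {ε : ℝ} (hε : 0 < ε) :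
    ∃ N : ℕ,
      MeasurableSet {s : ℝ | s ∈ Set.Icc (0:ℝ) 2 ∧ ∀ m ≥ N, |k (c m + s) - k (c m)| ≤ ε} ∧
      ENNReal.ofReal (3/2) <
        volume {s : ℝ | s ∈ Set.Icc (0:ℝ) 2 ∧ ∀ m ≥ N, |k (c m + s) - k (c m)| ≤ ε} := by
  set W : ℕ → Set ℝ :=
    fun n => {s : ℝ | s ∈ Set.Icc (0:ℝ) 2 ∧ ∀ m ≥ n, |k (c m + s) - k (c m)| ≤ ε} with hW
  have hclosed : ∀ n, IsClosed (W n) := by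
    intro n
    have hEq : W n = Set.Icc (0:ℝ) 2 ∩
        ⋂ (m : ℕ), ⋂ (_ : m ≥ n), {s : ℝ | |k (c m + s) - k (c m)| ≤ ε} := by
      ext s
      simp only [hW, Set.mem_inter_iff, Set.mem_iInter, Set.mem_setOf_eq]
    rw [hEq]
    refine isClosed_Icc.inter (isClosed_iInter fun m => isClosed_iInter fun _ => ?_)
    have hcont : Continuous fun s : ℝ => |k (c m + s) - k (c m)| :=
      ((hk.comp (continuous_const.add continuous_id)).sub continuous_const).abs
    exact isClosed_le hcont continuous_const
  have hmono : Monotone W := by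
    intro n n' hnn' s hsmem
    exact ⟨hsmem.1, fun m hm => hsmem.2 m (hnn'.trans hm)⟩
  have hunion : ⋃ n, W n = Set.Icc (0:ℝ) 2 := by
    apply subset_antisymm (Set.iUnion_subset fun n s hsmem => hsmem.1)
    intro s hsmem
    have h4 : ∀ᶠ m in atTop, dist (k (c m + s) - k (c m)) 0 < ε :=
      (hs s).eventually (Metric.ball_mem_nhds (0:ℝ) hε)
    obtain ⟨N, hN⟩ := eventually_atTop.mp h4
    refine Set.mem_iUnion.mpr ⟨N, hsmem, fun m hm => ?_⟩
    have := hN m hm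
    rw [Real.dist_eq, sub_zero] at this
    exact this.le
  have hvol := tendsto_measure_iUnion_atTop (μ := volume) hmono
  rw [hunion] at hvol
  have h2 : ENNReal.ofReal (3/2) < volume (Set.Icc (0:ℝ) 2) := by
    rw [Real.volume_Icc, show (2:ℝ) - 0 = 2 by norm_num]
    exact (ENNReal.ofReal_lt_ofReal_iff (by norm_num)).mpr (by norm_num)
  have h3 := hvol.eventually_const_lt h2
  obtain ⟨N, hN⟩ := eventually_atTop.mp h3
  exact ⟨N, (hclosed N).measurableSet, hN N le_rfl⟩

/-- Uniform convergence theorem for slowly varying functions (additive form). -/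
lemma uct_additive (k : ℝ → ℝ) (hk : Continuous k)
    (hslow : ∀ u : ℝ, Tendsto (fun x => k (x + u) - k x) atTop (nhds 0))
    {ε : ℝ} (hε : 0 < ε) :
    ∃ X : ℝ, ∀ x ≥ X, ∀ u ∈ Set.Icc (0:ℝ) 1, |k (x + u) - k x| ≤ ε := by
  by_contra hcon
  push_neg at hcon
  choose x hx u hu hgt using fun n : ℕ => hcon n
  have hxtop : Tendsto x atTop atTop := tendsto_atTop_mono hx tendsto_natCast_atTop_atTop
  have hxutop : Tendsto (fun n => x n + u n) atTop atTop :=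
    tendsto_atTop_mono (fun n => le_add_of_nonneg_right (hu n).1) hxtop
  have hε3 : 0 < ε/3 := by linarith
  obtain ⟨N₁, hmA, hvA⟩ := uct_aux k hk x (fun s => (hslow s).comp hxtop) hε3
  obtain ⟨N₂, hmB, hvB⟩ := uct_aux k hk (fun n => x n + u n)
    (fun s => (hslow s).comp hxutop) hε3
  set n := max N₁ N₂ with hn
  set A := {s : ℝ | s ∈ Set.Icc (0:ℝ) 2 ∧ ∀ m ≥ N₁, |k (x m + s) - k (x m)| ≤ ε/3} with hA
  set B := {s : ℝ | s ∈ Set.Icc (0:ℝ) 2 ∧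
      ∀ m ≥ N₂, |k (x m + u m + s) - k (x m + u m)| ≤ ε/3} with hB
  set B' := (fun s : ℝ => s + -(u n)) ⁻¹' B with hB'
  have hmB' : MeasurableSet B' := hmB.preimage (measurable_add_const _)
  have hvB' : ENNReal.ofReal (3/2) < volume B' := by
    rw [hB', measure_preimage_add_right]
    exact hvB
  have hsub : A ∪ B' ⊆ Set.Icc (0:ℝ) 3 := by
    rintro s (hsmem | hsmem)
    · exact ⟨hsmem.1.1, by linarith [hsmem.1.2]⟩
    · have hmem : s + -(u n) ∈ B := hsmem
      obtain ⟨⟨hb1, hb2⟩, -⟩ := hmem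
      exact ⟨by linarith [(hu n).1], by linarith [(hu n).2]⟩
  have hABvol : volume (A ∪ B') ≤ ENNReal.ofReal 3 := by
    refine le_trans (measure_mono hsub) ?_
    rw [Real.volume_Icc, show (3:ℝ) - 0 = 3 by norm_num]
  have hkey := measure_union_add_inter (μ := volume) A hmB'
  have hne : (A ∩ B').Nonempty := by
    apply nonempty_of_measure_ne_zero (μ := volume)
    intro h0
    rw [h0, add_zero] at hkey
    have hlt : ENNReal.ofReal 3 < volume A + volume B' := by
      have := ENNReal.add_lt_add hvA hvB'
      rwa [← ENNReal.ofReal_add (by norm_num) (by norm_num),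
        show (3/2:ℝ) + 3/2 = 3 by norm_num] at this
    rw [← hkey] at hlt
    exact absurd (lt_of_lt_of_le hlt hABvol) (lt_irrefl _)
  obtain ⟨s, hsA, hsB⟩ := hne
  have e1 : |k (x n + s) - k (x n)| ≤ ε/3 := hsA.2 n (le_max_left _ _)
  have hmemB : s + -(u n) ∈ B := hsB
  have e2 := hmemB.2 n (le_max_right _ _)
  rw [show x n + u n + (s + -(u n)) = x n + s by ring] at e2
  have e3 := hgt n
  have e4 := abs_sub_le (k (x n + u n)) (k (x n + s)) (k (x n))
  have e5 : |k (x n + u n) - k (x n + s)| = |k (x n + s) - k (x n + u n)| := abs_sub_comm _ _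
  rw [e5] at e4
  linarith

/-- Chaining the uniform bound over unit steps. -/
lemma chain_bound (k : ℝ → ℝ) {X δ : ℝ}
    (h : ∀ x ≥ X, ∀ u ∈ Set.Icc (0:ℝ) 1, |k (x + u) - k x| ≤ δ) :
    ∀ v w : ℝ, X ≤ v → v ≤ w → |k w - k v| ≤ δ * (1 + (w - v)) := by
  have hδ0 : 0 ≤ δ := by
    have := h X le_rfl 0 ⟨le_rfl, zero_le_one⟩
    simpa using this
  have claim : ∀ n : ℕ, ∀ v w : ℝ, X ≤ v → v ≤ w → w ≤ v + (n:ℝ) + 1 →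
      |k w - k v| ≤ δ * ((n:ℝ) + 1) := by
    intro n
    induction n with
    | zero =>
      intro v w h1 h2 h3
      push_cast at h3
      have := h v h1 (w - v) ⟨by linarith, by linarith⟩
      rw [show v + (w - v) = w by ring] at this
      push_cast
      linarith
    | succ n ih =>
      intro v w h1 h2 h3
      push_cast at h3 ⊢
      by_cases hw : w ≤ v + (n:ℝ) + 1
      · have := ih v w h1 h2 hw
        nlinarith [abs_nonneg (k w - k v)]
      · push_neg at hw
        have e1 := ih (v+1) w (by linarith) (by linarith) (by linarith)
        have e2 := h v h1 1 ⟨zero_le_one, le_rfl⟩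
        have e4 := abs_sub_le (k w) (k (v+1)) (k v)
        have e5 : |k w - k (v+1)| = |k (v+1) - k w| := abs_sub_comm _ _
        linarith [abs_sub_comm (k (v+1)) (k v)]
  intro v w h1 h2
  obtain ⟨n, hn1, hn2⟩ : ∃ n : ℕ, (n:ℝ) ≤ w - v ∧ w - v < (n:ℝ) + 1 :=
    ⟨⌊w - v⌋₊, Nat.floor_le (by linarith), Nat.lt_floor_add_one _⟩
  have hcl := claim n v w h1 h2 (by linarith)
  have hmul : δ * ((n:ℝ) + 1) ≤ δ * (1 + (w - v)) :=
    mul_le_mul_of_nonneg_left (by linarith) hδ0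
  linarith

/-- Potter bounds for a continuous positive regularly varying function. -/
lemma potter (h : ℝ → ℝ) (ρ : ℝ) (hcont : ContinuousOn h (Set.Ici 0))
    (hpos : ∀ t ≥ (0:ℝ), 0 < h t) (hrv : RegVary h ρ) {δ : ℝ} (hδ : 0 < δ) :
    ∃ X : ℝ, 1 ≤ X ∧ ∀ x y : ℝ, X ≤ y → y ≤ x →
      h y / h x ≤ Real.exp δ * (y / x) ^ (ρ - δ) ∧
      Real.exp (-δ) * (y / x) ^ (ρ + δ) ≤ h y / h x := by
  have hepos : ∀ x : ℝ, 0 < h (Real.exp x) := fun x => hpos _ (Real.exp_pos x).le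
  set k : ℝ → ℝ := fun x => Real.log (h (Real.exp x)) - ρ * x with hkdef
  have hhe : Continuous fun x : ℝ => h (Real.exp x) := by
    have := hcont.comp_continuous Real.continuous_exp (fun x => (Real.exp_pos x).le)
    exact this
  have hkc : Continuous k :=
    (hhe.log fun x => (hepos x).ne').sub (continuous_const.mul continuous_id)
  have hslow : ∀ u : ℝ, Tendsto (fun x => k (x + u) - k x) atTop (nhds 0) := by
    intro u
    have h1 : Tendsto (fun x : ℝ => h (Real.exp u * x) / h x) atTop
        (nhds (Real.exp u ^ ρ)) := hrv _ (Real.exp_pos u)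
    have h2 : Tendsto (fun x : ℝ => h (Real.exp u * Real.exp x) / h (Real.exp x)) atTop
        (nhds (Real.exp u ^ ρ)) := h1.comp Real.tendsto_exp_atTop
    have hne : Real.exp u ^ ρ ≠ 0 := by positivity
    have h3 := (h2.log hne).sub_const (ρ * u)
    rw [Real.log_rpow (Real.exp_pos u), Real.log_exp, sub_self] at h3
    have h4 : (fun x : ℝ =>
        Real.log (h (Real.exp u * Real.exp x) / h (Real.exp x)) - ρ * u) =
        fun x => k (x + u) - k x := by
      funext x
      have hp1 : h (Real.exp u * Real.exp x) ≠ 0 := (hpos _ (by positivity)).ne'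
      rw [Real.log_div hp1 (hepos x).ne']
      simp only [hkdef]
      rw [Real.exp_add, mul_comm (Real.exp x) (Real.exp u)]
      ring
    rw [h4] at h3
    exact h3
  obtain ⟨X₀, hX₀⟩ := uct_additive k hkc hslow hδ
  have hcb := chain_bound k hX₀
  refine ⟨max (Real.exp X₀) 1, le_max_right _ _, ?_⟩
  intro x y hy hxy
  have hy0 : 0 < y := lt_of_lt_of_le zero_lt_one (le_trans (le_max_right _ _) hy)
  have hx0 : 0 < x := lt_of_lt_of_le hy0 hxy
  have hyh : 0 < h y := hpos y hy0.le
  have hxh : 0 < h x := hpos x hx0.le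
  have hXv : X₀ ≤ Real.log y := by
    rw [← Real.log_exp X₀]
    exact Real.log_le_log (Real.exp_pos _) (le_trans (le_max_left _ _) hy)
  have hvw : Real.log y ≤ Real.log x := Real.log_le_log hy0 hxy
  have hb := hcb (Real.log y) (Real.log x) hXv hvw
  have hky : k (Real.log y) = Real.log (h y) - ρ * Real.log y := by
    simp only [hkdef, Real.exp_log hy0]
  have hkx : k (Real.log x) = Real.log (h x) - ρ * Real.log x := by
    simp only [hkdef, Real.exp_log hx0]
  rw [hkx, hky, abs_le] at hb
  obtain ⟨hb1, hb2⟩ := hb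
  have hqe : h y / h x = Real.exp (Real.log (h y) - Real.log (h x)) := by
    rw [Real.exp_sub, Real.exp_log hyh, Real.exp_log hxh]
  have hre : ∀ c : ℝ, (y/x) ^ c = Real.exp ((Real.log y - Real.log x) * c) := by
    intro c
    rw [Real.rpow_def_of_pos (div_pos hy0 hx0), Real.log_div hy0.ne' hx0.ne']
  constructor
  · rw [hqe, hre, ← Real.exp_add]
    apply Real.exp_le_exp.mpr
    nlinarith [hb1, hb2]
  · rw [hqe, hre, ← Real.exp_add]
    apply Real.exp_le_exp.mpr
    nlinarith [hb1, hb2]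

/-- For `z ∈ [1/2, 1]` and exponent `q ≥ -1/2` we have `z ^ q ≤ 2`. -/
lemma half_rpow_le_two {z q : ℝ} (hz : 1/2 ≤ z) (hz1 : z ≤ 1) (hq : -(1/2 : ℝ) ≤ q) :
    z ^ q ≤ 2 := by
  have hz0 : (0:ℝ) < z := lt_of_lt_of_le (by norm_num) hz
  have h1 : z ^ q ≤ z ^ (-(1/2:ℝ)) := Real.rpow_le_rpow_of_exponent_ge hz0 hz1 hq
  have h2 : z ^ (-(1/2:ℝ)) ≤ ((1:ℝ)/2) ^ (-(1/2:ℝ)) :=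
    Real.rpow_le_rpow_of_nonpos (by norm_num) hz (by norm_num)
  have h3 : ((1:ℝ)/2) ^ (-(1/2:ℝ)) = (2:ℝ) ^ ((1:ℝ)/2) := by
    rw [one_div, Real.inv_rpow (by norm_num : (0:ℝ) ≤ 2), ← Real.rpow_neg (by norm_num), neg_neg]
  have h4 : (2:ℝ) ^ ((1:ℝ)/2) ≤ 2 := by
    calc (2:ℝ) ^ ((1:ℝ)/2) ≤ 2 ^ (1:ℝ) :=
          Real.rpow_le_rpow_of_exponent_le (by norm_num) (by norm_num)
      _ = 2 := Real.rpow_one 2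
  linarith

theorem convolution_beta_limit
    (a b : ℝ → ℝ) (ρ σ : ℝ) (hρ : 0 ≤ ρ) (hσ : 0 ≤ σ)
    (ha_cont : ContinuousOn a (Set.Ici 0)) (ha_pos : ∀ t ≥ (0:ℝ), 0 < a t)
    (ha_rv : RegVary a ρ) (ha_inf : Filter.Tendsto a Filter.atTop Filter.atTop)
    (hb_cont : ContinuousOn b (Set.Ici 0)) (hb_pos : ∀ t ≥ (0:ℝ), 0 < b t)
    (hb_rv : RegVary b σ)
    (hb0 : σ = 0 →
      (∃ φ : ℝ → ℝ, StrictMono φ ∧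
        Filter.Tendsto (fun t => b t / φ t) Filter.atTop (nhds 1)) ∧
      Filter.Tendsto b Filter.atTop Filter.atTop) :
    Filter.Tendsto
      (fun t => (∫ s in (0:ℝ)..t, a s * b (t - s)) / (t * a t * b t))
      Filter.atTop
      (nhds (∫ l in (0:ℝ)..1, l ^ ρ * (1 - l) ^ σ)) := by
  -- b tends to infinity
  have hb_inf : Tendsto b atTop atTop := by
    rcases eq_or_lt_of_le hσ with hσ0 | hσpos
    · exact (hb0 hσ0.symm).2
    · obtain ⟨X, hX1, hP⟩ := potter b σ hb_cont hb_pos hb_rv (half_pos hσpos)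
      have hX0 : (0:ℝ) < X := lt_of_lt_of_le zero_lt_one hX1
      have hbX : 0 < b X := hb_pos X hX0.le
      set C := Real.exp (σ/2) with hC
      have hCpos : 0 < C := Real.exp_pos _
      have hlow : ∀ t ≥ X, b X / C * (t / X) ^ (σ/2) ≤ b t := by
        intro t ht
        have ht0 : 0 < t := lt_of_lt_of_le hX0 ht
        have hbt : 0 < b t := hb_pos t ht0.le
        have hP1 := (hP t X le_rfl ht).1
        rw [show σ - σ/2 = σ/2 by ring] at hP1
        have hXt0 : 0 < X / t := div_pos hX0 ht0
        have htX0 : 0 < t / X := div_pos ht0 hX0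
        have hpow : (X/t) ^ (σ/2) * (t/X) ^ (σ/2) = 1 := by
          rw [← Real.mul_rpow hXt0.le htX0.le, div_mul_div_comm, mul_comm,
            div_self (by positivity), Real.one_rpow]
        have h5 : b X * (t/X) ^ (σ/2) ≤ (C * (X/t) ^ (σ/2) * b t) * (t/X) ^ (σ/2) :=
          mul_le_mul_of_nonneg_right ((div_le_iff₀ hbt).mp hP1)
            (Real.rpow_nonneg htX0.le _)
        have h6 : (C * (X/t) ^ (σ/2) * b t) * (t/X) ^ (σ/2) = C * b t := by
          calc (C * (X/t) ^ (σ/2) * b t) * (t/X) ^ (σ/2)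
              = C * b t * ((X/t) ^ (σ/2) * (t/X) ^ (σ/2)) := by ring
            _ = C * b t := by rw [hpow, mul_one]
        rw [div_mul_eq_mul_div, div_le_iff₀ hCpos]
        calc b X * (t/X) ^ (σ/2) ≤ C * b t := by rw [← h6]; exact h5
          _ = b t * C := by ring
      have hltend : Tendsto (fun t : ℝ => b X / C * (t / X) ^ (σ/2)) atTop atTop := by
        have l1 : Tendsto (fun t : ℝ => t / X) atTop atTop :=
          tendsto_id.atTop_div_const hX0
        have l2 : Tendsto (fun t : ℝ => (t / X) ^ (σ/2)) atTop atTop :=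
          (tendsto_rpow_atTop (by positivity)).comp l1
        exact l2.const_mul_atTop (by positivity)
      apply tendsto_atTop_mono' atTop _ hltend
      filter_upwards [eventually_ge_atTop X] with t ht using hlow t ht
  -- Potter bounds for a and b with δ = 1/2
  obtain ⟨Xa, hXa1, hPa⟩ := potter a ρ ha_cont ha_pos ha_rv (by norm_num : (0:ℝ) < 1/2)
  obtain ⟨Xb, hXb1, hPb⟩ := potter b σ hb_cont hb_pos hb_rv (by norm_num : (0:ℝ) < 1/2)
  set X := max Xa Xb with hXdef
  have hX1 : (1:ℝ) ≤ X := le_trans hXa1 (le_max_left _ _)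
  have hX0 : (0:ℝ) < X := lt_of_lt_of_le zero_lt_one hX1
  -- bounds on compact [0, X]
  obtain ⟨za, hzam, hza⟩ := isCompact_Icc.exists_isMaxOn (Set.nonempty_Icc.mpr hX0.le)
    (ha_cont.mono (fun y hy => hy.1))
  obtain ⟨zb, hzbm, hzb⟩ := isCompact_Icc.exists_isMaxOn (Set.nonempty_Icc.mpr hX0.le)
    (hb_cont.mono (fun y hy => hy.1))
  set Ma := a za with hMa
  set Mb := b zb with hMb
  have hexp3 : Real.exp (1/2 : ℝ) ≤ 3 := by
    have h1 : Real.exp (1/2 : ℝ) ≤ Real.exp 1 := Real.exp_le_exp.mpr (by norm_num)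
    have h2 := Real.exp_one_lt_d9
    linarith
  -- the rescaled integrand
  set F : ℝ → ℝ → ℝ := fun t l => a (t*l) / a t * (b (t - t*l) / b t) with hF
  set bound : ℝ → ℝ := fun l => 18 * l ^ (ρ - 1/2) + 18 * (1-l) ^ (σ - 1/2) with hbound
  -- almost-every point of Ioc 0 1 is in Ioo 0 1
  have hae : ∀ᵐ l ∂(volume.restrict (Set.Ioc (0:ℝ) 1)), l ∈ Set.Ioo (0:ℝ) 1 := by
    have h1 : ∀ᵐ l ∂(volume.restrict (Set.Ioc (0:ℝ) 1)), l ∈ Set.Ioc (0:ℝ) 1 :=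
      ae_restrict_mem measurableSet_Ioc
    have h2 : (volume.restrict (Set.Ioc (0:ℝ) 1)) {(1:ℝ)} = 0 := by
      rw [Measure.restrict_apply (measurableSet_singleton 1)]
      exact measure_mono_null Set.inter_subset_left Real.volume_singleton
    have h3 : ∀ᵐ l ∂(volume.restrict (Set.Ioc (0:ℝ) 1)), l ≠ 1 := by
      rw [ae_iff]
      convert h2 using 2
      ext l; simp
    filter_upwards [h1, h3] with l hl hne
    exact ⟨hl.1, lt_of_le_of_ne hl.2 hne⟩
  -- main dominated convergence step
  have main : Tendsto (fun t => ∫ l in Set.Ioc (0:ℝ) 1, F t l) atTop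
      (nhds (∫ l in Set.Ioc (0:ℝ) 1, l ^ ρ * (1 - l) ^ σ)) := by
    apply tendsto_integral_filter_of_dominated_convergence bound
    · -- measurability
      filter_upwards [eventually_gt_atTop (0:ℝ)] with t ht
      apply ContinuousOn.aestronglyMeasurable _ measurableSet_Ioc
      apply ContinuousOn.mul
      · apply ContinuousOn.div_const
        exact ha_cont.comp (continuous_const.mul continuous_id).continuousOn
          (fun l hl => mul_nonneg ht.le hl.1.le)
      · apply ContinuousOn.div_const
        apply hb_cont.comp (Continuous.continuousOn (by continuity))
        intro l hl
        have : t * l ≤ t * 1 := mul_le_mul_of_nonneg_left hl.2 ht.le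
        simp only [Set.mem_Ici]
        nlinarith
    · -- domination
      filter_upwards [eventually_ge_atTop (2*X), ha_inf.eventually_ge_atTop Ma,
        hb_inf.eventually_ge_atTop Mb] with t ht2X hta htb
      filter_upwards [hae] with l hl
      have ht0 : (0:ℝ) < t := by linarith [hX0]
      have hl0 : (0:ℝ) < l := hl.1
      have hl1 : l < 1 := hl.2
      have htl0 : 0 < t*l := mul_pos ht0 hl0
      have htl1 : 0 < t - t*l := by nlinarith
      have hat : 0 < a t := ha_pos t ht0.le
      have hbt : 0 < b t := hb_pos t ht0.le
      have hatl : 0 < a (t*l) := ha_pos _ htl0.le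
      have hbtl : 0 < b (t - t*l) := hb_pos _ htl1.le
      have hG0 : 0 ≤ a (t*l) / a t * (b (t - t*l) / b t) := by positivity
      have hfa0 : 0 ≤ a (t*l) / a t := by positivity
      have hfb0 : 0 ≤ b (t - t*l) / b t := by positivity
      have hp : (0:ℝ) ≤ l ^ (ρ - 1/2) := Real.rpow_nonneg hl0.le _
      have hq : (0:ℝ) ≤ (1-l) ^ (σ - 1/2) := Real.rpow_nonneg (by linarith) _
      have hfa_of : X ≤ t*l → a (t*l) / a t ≤ 3 * l ^ (ρ - 1/2) := by
        intro hXtl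
        have harg := (hPa t (t*l) (le_trans (le_max_left Xa Xb) hXtl) (by nlinarith)).1
        rw [mul_div_cancel_left₀ l ht0.ne'] at harg
        calc a (t*l) / a t ≤ Real.exp (1/2) * l ^ (ρ - 1/2) := harg
          _ ≤ 3 * l ^ (ρ - 1/2) := mul_le_mul_of_nonneg_right hexp3 hp
      have hfb_of : X ≤ t - t*l → b (t - t*l) / b t ≤ 3 * (1-l) ^ (σ - 1/2) := by
        intro hXtl
        have harg := (hPb t (t - t*l) (le_trans (le_max_right Xa Xb) hXtl)
          (by nlinarith)).1
        rw [show (t - t*l)/t = 1 - l by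
          rw [sub_div, div_self ht0.ne', mul_div_cancel_left₀ l ht0.ne']] at harg
        calc b (t - t*l) / b t ≤ Real.exp (1/2) * (1-l) ^ (σ - 1/2) := harg
          _ ≤ 3 * (1-l) ^ (σ - 1/2) := mul_le_mul_of_nonneg_right hexp3 hq
      have hfa_le1 : t*l ≤ X → a (t*l) / a t ≤ 1 := by
        intro hle
        exact (div_le_one hat).mpr (le_trans (hza ⟨htl0.le, hle⟩) hta)
      have hfb_le1 : t - t*l ≤ X → b (t - t*l) / b t ≤ 1 := by
        intro hle
        exact (div_le_one hbt).mpr (le_trans (hzb ⟨htl1.le, hle⟩) htb)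
      rw [hF]
      simp only [Real.norm_eq_abs]
      rw [abs_of_nonneg hG0]
      rw [hbound]
      by_cases h1 : X ≤ t*l
      · by_cases h3 : l ≤ 1/2
        · -- middle/left; here X ≤ t - t*l automatically since l ≤ 1/2
          have h2 : X ≤ t - t*l := by nlinarith
          have hfb6 : b (t - t*l) / b t ≤ 6 := by
            have hb3 := hfb_of h2
            have h2' : (1-l) ^ (σ - 1/2) ≤ 2 :=
              half_rpow_le_two (by linarith) (by linarith) (by linarith)
            nlinarith
          have := mul_le_mul (hfa_of h1) hfb6 hfb0 (by positivity)
          nlinarith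
        · push_neg at h3
          by_cases h2 : X ≤ t - t*l
          · have hfa6 : a (t*l) / a t ≤ 6 := by
              have ha3 := hfa_of h1
              have h3' : l ^ (ρ - 1/2) ≤ 2 :=
                half_rpow_le_two (by linarith) (by linarith) (by linarith)
              nlinarith
            have := mul_le_mul hfa6 (hfb_of h2) hfb0 (by norm_num)
            nlinarith
          · push_neg at h2
            have := mul_le_mul (hfa_of h1) (hfb_le1 h2.le) hfb0 (by positivity)
            nlinarith
      · push_neg at h1
        have h2 : X ≤ t - t*l := by linarith
        have := mul_le_mul (hfa_le1 h1.le) (hfb_of h2) hfb0 zero_le_one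
        nlinarith
    · -- integrability of the bound
      have i1 : IntervalIntegrable (fun l : ℝ => l ^ (ρ - 1/2)) volume 0 1 :=
        intervalIntegral.intervalIntegrable_rpow' (by linarith)
      have i2' : IntervalIntegrable (fun l : ℝ => l ^ (σ - 1/2)) volume 0 1 :=
        intervalIntegral.intervalIntegrable_rpow' (by linarith)
      have i2 : IntervalIntegrable (fun l : ℝ => (1-l) ^ (σ - 1/2)) volume 0 1 := by
        have := (i2'.comp_sub_left 1).symm
        simpa using this
      have : IntervalIntegrable bound volume 0 1 := by
        rw [hbound]
        exact (i1.const_mul 18).add (i2.const_mul 18)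
      exact this.1
    · -- pointwise convergence
      filter_upwards [hae] with l hl
      have hA : Tendsto (fun t => a (t*l) / a t) atTop (nhds (l ^ ρ)) := by
        have := ha_rv l hl.1
        have heqf : (fun x : ℝ => a (l*x) / a x) = fun t => a (t*l) / a t := by
          funext x; rw [mul_comm]
        rwa [heqf] at this
      have hB : Tendsto (fun t => b (t - t*l) / b t) atTop (nhds ((1-l) ^ σ)) := by
        have := hb_rv (1-l) (by linarith [hl.2])
        have heqf : (fun x : ℝ => b ((1-l)*x) / b x) = fun t => b (t - t*l) / b t := by
          funext x; rw [show (1-l)*x = x - x*l by ring]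
        rwa [heqf] at this
      exact hA.mul hB
  -- identify the original expression with the rescaled integral, eventually
  have heq : ∀ᶠ t in atTop,
      (∫ s in (0:ℝ)..t, a s * b (t - s)) / (t * a t * b t)
        = ∫ l in Set.Ioc (0:ℝ) 1, F t l := by
    filter_upwards [eventually_gt_atTop (0:ℝ)] with t ht
    have hI := intervalIntegral.smul_integral_comp_mul_left
      (a := (0:ℝ)) (b := (1:ℝ)) (f := fun s => a s * b (t - s)) t
    simp only [mul_zero, mul_one, smul_eq_mul] at hI
    rw [← hI, mul_assoc, mul_div_mul_left _ _ ht.ne']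
    rw [← intervalIntegral.integral_div, intervalIntegral.integral_of_le zero_le_one]
    apply integral_congr_ae (ae_of_all _ (fun l => ?_))
    simp only [hF, div_mul_div_comm]
  rw [intervalIntegral.integral_of_le zero_le_one]
  exact main.congr' (Filter.EventuallyEq.symm heq)
end

section
/- Suppose f ∈ RV_∞(β) with β ∈ [0,1) is continuous and positive, and define F(x) = ∫₁ˣ du/f(u) for x > 0. Then F(x) ~ x/((1−β)·f(x)) as x → ∞; in particular F ∈ RV_∞(1−β) and F(x) → ∞ as x → ∞. -/
/-!
Write `k v = log (f (exp v))`; regular variation says `k (v + t) - k v → β t` for every `t`.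
Since `k` is continuous, a Baire category argument makes this convergence uniform for `t` in
compact sets, which gives Potter's bound `f x ≤ exp ε * (x / u) ^ (β + ε) * f u` for all large
`u ≤ x`. The substitution `u = s x` turns `F x * f x / x` into `∫₀¹ f x / f (s x) ds` up to a
vanishing term; the integrand tends to `s ^ (-β)` and Potter's bound dominates it by
`exp ε * s ^ (-(β + ε))`, integrable once `β + ε < 1`. Dominated convergence then gives the limit
`∫₀¹ s ^ (-β) ds = 1 / (1 - β)`.
-/

open Filter Topology Set MeasureTheory

def incrDefect (k : ℝ → ℝ) (ρ u t : ℝ) : ℝ := k (u + t) - k u - ρ * t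

section UniformConvergence

variable {k : ℝ → ℝ} {ρ : ℝ}

lemma incrDefect_add (u s t : ℝ) :
    incrDefect k ρ u (s + t) = incrDefect k ρ u s + incrDefect k ρ (u + s) t := by
  simp only [incrDefect, add_assoc]
  ring

lemma exists_pos_forall_Icc_abs_incrDefect_le (hk : Continuous k)
    (h : ∀ t, Tendsto (fun u => incrDefect k ρ u t) atTop (𝓝 0)) {ε : ℝ} (hε : 0 < ε) :
    ∃ δ > 0, ∃ N, ∀ u ≥ N, ∀ t ∈ Icc 0 δ, |incrDefect k ρ u t| ≤ ε := by
  set B : ℕ → Set ℝ := fun n => {t | ∀ u ≥ (n : ℝ), |incrDefect k ρ u t| ≤ ε / 2}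
  have hB_closed (n : ℕ) : IsClosed (B n) := by
    simp only [B, ofPred_forall]
    refine isClosed_biInter fun u _ => isClosed_le ?_ continuous_const
    unfold incrDefect
    fun_prop
  have hB_cover : ⋃ n, B n = univ := by
    refine eq_univ_of_forall fun t => mem_iUnion.2 ?_
    obtain ⟨N, hN⟩ := eventually_atTop.1
      ((h t).abs.eventually_lt_const (u := ε / 2) (by simpa using half_pos hε))
    exact ⟨⌈N⌉₊, fun u hu => (hN u ((Nat.le_ceil N).trans hu)).le⟩
  -- Baire: some `B n` contains a ball around some `t₀`, and `incrDefect_add` transports the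
  -- uniform bound from near `t₀` to near `0`.
  obtain ⟨n, t₀, ht₀⟩ := nonempty_interior_of_iUnion_of_closed hB_closed hB_cover
  obtain ⟨r, hr, hball⟩ := Metric.mem_nhds_iff.1 (mem_interior_iff_mem_nhds.1 ht₀)
  refine ⟨r / 2, by positivity, n, fun u hu t ht => ?_⟩
  have h₁ : |incrDefect k ρ u (t + t₀)| ≤ ε / 2 := by
    refine hball ?_ u hu
    rw [Metric.mem_ball, Real.dist_eq, add_sub_cancel_right, abs_of_nonneg ht.1]
    linarith [ht.2]
  have h₂ : |incrDefect k ρ (u + t) t₀| ≤ ε / 2 :=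
    hball (Metric.mem_ball_self hr) (u + t) (by linarith [ht.1])
  rw [incrDefect_add] at h₁
  calc |incrDefect k ρ u t|
        = |(incrDefect k ρ u t + incrDefect k ρ (u + t) t₀) - incrDefect k ρ (u + t) t₀| := by
          rw [add_sub_cancel_right]
    _ ≤ _ := abs_sub _ _
    _ ≤ ε := by linarith

lemma exists_forall_Icc_abs_incrDefect_le (hk : Continuous k)
    (h : ∀ t, Tendsto (fun u => incrDefect k ρ u t) atTop (𝓝 0)) {ε : ℝ} (hε : 0 < ε) (T : ℝ) :
    ∃ N, ∀ u ≥ N, ∀ t ∈ Icc 0 T, |incrDefect k ρ u t| ≤ ε := by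
  obtain ⟨δ, hδ, N₀, hN₀⟩ := exists_pos_forall_Icc_abs_incrDefect_le hk h (half_pos hε)
  have hgrid : ∀ᶠ u in atTop,
      ∀ j ∈ Finset.range (⌊T / δ⌋₊ + 1), |incrDefect k ρ u (j * δ)| < ε / 2 :=
    (Finset.range _).eventually_all.2 fun j _ =>
      (h _).abs.eventually_lt_const (by simpa using half_pos hε)
  refine eventually_atTop.1 ?_
  filter_upwards [hgrid, eventually_ge_atTop N₀] with u hgrid_u hu t ht
  -- cut `t` at the grid point `j δ` just below it
  set j := ⌊t / δ⌋₊
  have hj : j ∈ Finset.range (⌊T / δ⌋₊ + 1) :=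
    Finset.mem_range_succ_iff.2 (Nat.floor_le_floor (div_le_div_of_nonneg_right ht.2 hδ.le))
  have hj_le : (j : ℝ) * δ ≤ t := (le_div_iff₀ hδ).1 (Nat.floor_le (div_nonneg ht.1 hδ.le))
  have hj_lt : t < (j + 1) * δ := (div_lt_iff₀ hδ).1 (Nat.lt_floor_add_one _)
  have h₁ := hN₀ (u + j * δ) (by nlinarith [j.cast_nonneg (α := ℝ)]) (t - j * δ)
    ⟨by linarith, by linarith⟩
  rw [← add_sub_cancel (j * δ) t, incrDefect_add]
  linarith [abs_add_le (incrDefect k ρ u (j * δ)) (incrDefect k ρ (u + j * δ) (t - j * δ)),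
    hgrid_u j hj]

lemma exists_abs_incrDefect_le_add_one_mul (hk : Continuous k)
    (h : ∀ t, Tendsto (fun u => incrDefect k ρ u t) atTop (𝓝 0)) {ε : ℝ} (hε : 0 < ε) :
    ∃ N, ∀ u ≥ N, ∀ t ≥ 0, |incrDefect k ρ u t| ≤ (t + 1) * ε := by
  obtain ⟨N, hN⟩ := exists_forall_Icc_abs_incrDefect_le hk h hε 1
  have hsteps (m : ℕ) :
      ∀ u ≥ N, ∀ s ∈ Icc (0 : ℝ) 1, |incrDefect k ρ u (m + s)| ≤ (m + 1) * ε := by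
    induction m with
    | zero => simpa using hN
    | succ m ih =>
      intro u hu s hs
      rw [show ((m + 1 : ℕ) : ℝ) + s = 1 + (m + s) by push_cast; ring, incrDefect_add,
        Nat.cast_succ]
      linarith [abs_add_le (incrDefect k ρ u 1) (incrDefect k ρ (u + 1) (m + s)),
        hN u hu 1 ⟨zero_le_one, le_rfl⟩, ih (u + 1) (by linarith) s hs]
  refine ⟨N, fun u hu t ht => ?_⟩
  have hfloor := Nat.floor_le ht
  have h₁ := hsteps ⌊t⌋₊ u hu (t - ⌊t⌋₊) ⟨by linarith, by linarith [Nat.lt_floor_add_one t]⟩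
  rw [add_sub_cancel] at h₁
  exact h₁.trans (by gcongr)

end UniformConvergence

lemma integral_one_div_mul_div_eq_integral_indicator (f : ℝ → ℝ) {X₀ x : ℝ} (hX₀ : 0 < X₀)
    (hx : X₀ ≤ x) :
    (∫ u in X₀..x, 1 / f u) * f x / x =
      ∫ s in Ioc 0 1, (Ioc (X₀ / x) 1).indicator (fun s => f x / f (s * x)) s := by
  have hx₀ : 0 < x := hX₀.trans_le hx
  have hsubst : ∫ s in (X₀ / x)..1, 1 / f (s * x) = x⁻¹ * ∫ u in X₀..x, 1 / f u := by
    rw [intervalIntegral.integral_comp_mul_right (fun u => 1 / f u) hx₀.ne', smul_eq_mul,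
      div_mul_cancel₀ X₀ hx₀.ne', one_mul]
  rw [setIntegral_indicator measurableSet_Ioc,
    inter_eq_self_of_subset_right (Ioc_subset_Ioc_left (by positivity)),
    ← intervalIntegral.integral_of_le ((div_le_one hx₀).2 hx)]
  simp only [div_eq_mul_one_div (f x), intervalIntegral.integral_const_mul, hsubst]
  field_simp

lemma integral_Ioc_zero_one_rpow_neg {β : ℝ} (hβ : β < 1) :
    ∫ s in Ioc 0 1, s ^ (-β) = (1 - β)⁻¹ := by
  rw [← intervalIntegral.integral_of_le zero_le_one, integral_rpow (Or.inl (by linarith)),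
    Real.one_rpow, Real.zero_rpow (by linarith), sub_zero, neg_add_eq_sub, one_div]

namespace RegVary

variable {f : ℝ → ℝ} {β : ℝ}

lemma tendsto_incrDefect_log_comp_exp (hf_pos : ∀ x > 0, 0 < f x) (hf_rv : RegVary f β)
    (t : ℝ) :
    Tendsto (fun u => incrDefect (fun v => Real.log (f (Real.exp v))) β u t) atTop (𝓝 0) := by
  have hlim := ((hf_rv _ (Real.exp_pos t)).comp Real.tendsto_exp_atTop).log
    (Real.rpow_pos_of_pos (Real.exp_pos t) β).ne'
  rw [Real.log_rpow (Real.exp_pos t), Real.log_exp] at hlim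
  refine tendsto_sub_nhds_zero_iff.2 (hlim.congr fun u => ?_)
  rw [Function.comp_apply, ← Real.exp_add, add_comm,
    Real.log_div (hf_pos _ (Real.exp_pos _)).ne' (hf_pos _ (Real.exp_pos _)).ne']

lemma exists_potter_bound (hf_cont : ContinuousOn f (Ioi 0)) (hf_pos : ∀ x > 0, 0 < f x)
    (hf_rv : RegVary f β) {ε : ℝ} (hε : 0 < ε) :
    ∃ X₀ > 0, ∀ u x, X₀ ≤ u → u ≤ x → f x ≤ Real.exp ε * (x / u) ^ (β + ε) * f u := by
  have hk : Continuous fun v => Real.log (f (Real.exp v)) :=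
    Real.continuousOn_log.comp_continuous
      (hf_cont.comp_continuous Real.continuous_exp Real.exp_pos)
      fun v => (hf_pos _ (Real.exp_pos v)).ne'
  obtain ⟨N, hN⟩ := exists_abs_incrDefect_le_add_one_mul hk
    (tendsto_incrDefect_log_comp_exp hf_pos hf_rv) hε
  refine ⟨Real.exp N, Real.exp_pos N, fun u x hu hx => ?_⟩
  have hu₀ : 0 < u := (Real.exp_pos N).trans_le hu
  have hx₀ : 0 < x := hu₀.trans_le hx
  have hbound := (abs_le.1 (hN (Real.log u) ((Real.le_log_iff_exp_le hu₀).2 hu)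
    (Real.log (x / u)) (Real.log_nonneg ((one_le_div hu₀).2 hx)))).2
  simp only [incrDefect, Real.exp_add, Real.exp_log hu₀, Real.exp_log (div_pos hx₀ hu₀),
    mul_div_cancel₀ x hu₀.ne'] at hbound
  rw [← Real.log_le_log_iff (hf_pos x hx₀) (by have := hf_pos u hu₀; positivity),
    Real.log_mul (by positivity) (hf_pos u hu₀).ne', Real.log_mul (by positivity) (by positivity),
    Real.log_exp, Real.log_rpow (div_pos hx₀ hu₀)]
  nlinarith [Real.log_nonneg ((one_le_div hu₀).2 hx)]

lemma tendsto_div_atTop (hβ : β < 1) (hf_cont : ContinuousOn f (Ioi 0))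
    (hf_pos : ∀ x > 0, 0 < f x) (hf_rv : RegVary f β) :
    Tendsto (fun x => x / f x) atTop atTop := by
  obtain ⟨X₀, hX₀, hP⟩ := exists_potter_bound hf_cont hf_pos hf_rv (half_pos (sub_pos.2 hβ))
  set p := β + (1 - β) / 2
  set C := Real.exp ((1 - β) / 2) * f X₀ / X₀ ^ p
  have hC : 0 < C := by have := hf_pos X₀ hX₀; positivity
  have hp : p < 1 := by simp only [p]; linarith
  refine tendsto_atTop_mono' _ ?_ ((tendsto_rpow_atTop (sub_pos.2 hp)).const_mul_atTop
    (inv_pos.2 hC))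
  filter_upwards [eventually_ge_atTop X₀] with x hx
  have hx₀ : 0 < x := hX₀.trans_le hx
  have hfx : f x ≤ C * x ^ p := by
    convert hP X₀ x le_rfl hx using 1
    have := Real.rpow_pos_of_pos hX₀ p
    rw [Real.div_rpow hx₀.le hX₀.le]
    simp only [C]
    field_simp
  rw [le_div_iff₀ (hf_pos x hx₀)]
  calc C⁻¹ * x ^ (1 - p) * f x ≤ C⁻¹ * x ^ (1 - p) * (C * x ^ p) := by gcongr
    _ = x := by
      rw [Real.rpow_sub hx₀, Real.rpow_one]
      field_simp

lemma tendsto_integral_indicator_div (hf_cont : ContinuousOn f (Ioi 0))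
    (hf_pos : ∀ x > 0, 0 < f x) (hf_rv : RegVary f β) {X₀ ε : ℝ} (hX₀ : 0 < X₀)
    (hβε : β + ε < 1)
    (hP : ∀ u x, X₀ ≤ u → u ≤ x → f x ≤ Real.exp ε * (x / u) ^ (β + ε) * f u) :
    Tendsto (fun x => ∫ s in Ioc 0 1, (Ioc (X₀ / x) 1).indicator (fun s => f x / f (s * x)) s)
      atTop (𝓝 (∫ s in Ioc 0 1, s ^ (-β))) := by
  refine tendsto_integral_filter_of_dominated_convergence (fun s => Real.exp ε * s ^ (-(β + ε)))
    ?_ ?_ ?_ ?_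
  · filter_upwards [eventually_gt_atTop 0] with x hx₀
    refine (ContinuousOn.aestronglyMeasurable ?_ measurableSet_Ioc).indicator measurableSet_Ioc
    refine continuousOn_const.div (hf_cont.comp (by fun_prop) fun s hs => mul_pos hs.1 hx₀)
      fun s hs => (hf_pos _ (mul_pos hs.1 hx₀)).ne'
  · filter_upwards [eventually_ge_atTop X₀] with x hx
    have hx₀ : 0 < x := hX₀.trans_le hx
    filter_upwards [ae_restrict_mem measurableSet_Ioc] with s hs
    by_cases hmem : s ∈ Ioc (X₀ / x) 1
    · have hsx : 0 < s * x := mul_pos hs.1 hx₀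
      rw [indicator_of_mem hmem, Real.norm_of_nonneg (div_nonneg (hf_pos x hx₀).le
        (hf_pos _ hsx).le), div_le_iff₀ (hf_pos _ hsx), Real.rpow_neg hs.1.le,
        ← Real.inv_rpow hs.1.le, show s⁻¹ = x / (s * x) by field_simp]
      exact hP _ _ ((div_lt_iff₀ hx₀).1 hmem.1).le (by nlinarith [hmem.2])
    · rw [indicator_of_notMem hmem, norm_zero]
      have := hs.1
      positivity
  · exact (((intervalIntegrable_iff_integrableOn_Ioc_of_le zero_le_one).1
      (intervalIntegral.intervalIntegrable_rpow' (by linarith))).const_mul _)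
  · filter_upwards [ae_restrict_mem measurableSet_Ioc] with s hs
    have hlim := (hf_rv s hs.1).inv₀ (Real.rpow_pos_of_pos hs.1 β).ne'
    rw [← Real.rpow_neg hs.1.le] at hlim
    refine (hlim.congr fun x => by rw [inv_div]).congr' ?_
    filter_upwards [eventually_gt_atTop (X₀ / s)] with x hx
    have hx₀ : 0 < x := (div_pos hX₀ hs.1).trans hx
    rw [indicator_of_mem (show s ∈ Ioc (X₀ / x) 1 from
      ⟨(div_lt_iff₀ hx₀).2 ((div_lt_iff₀' hs.1).1 hx), hs.2⟩)]

lemma tendsto_integral_one_div_mul_div (hβ : β < 1) (hf_cont : ContinuousOn f (Ioi 0))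
    (hf_pos : ∀ x > 0, 0 < f x) (hf_rv : RegVary f β) :
    Tendsto (fun x => (∫ u in (1 : ℝ)..x, 1 / f u) * f x / x) atTop (𝓝 (1 - β)⁻¹) := by
  obtain ⟨X₀, hX₀, hP⟩ := exists_potter_bound hf_cont hf_pos hf_rv (half_pos (sub_pos.2 hβ))
  have hg : ContinuousOn (fun u => 1 / f u) (Ioi 0) :=
    continuousOn_const.div hf_cont fun v hv => (hf_pos v hv).ne'
  have hint {a b : ℝ} (ha : 0 < a) (hb : 0 < b) :
      IntervalIntegrable (fun u => 1 / f u) volume a b :=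
    (hg.mono fun u hu => (lt_min ha hb).trans_le hu.1).intervalIntegrable
  -- the integral over `[1, X₀]` is a constant and `x / f x → ∞`
  have hhead : Tendsto (fun x => (∫ u in (1 : ℝ)..X₀, 1 / f u) * f x / x) atTop (𝓝 0) := by
    simpa [mul_div_assoc] using
      ((tendsto_div_atTop hβ hf_cont hf_pos hf_rv).inv_tendsto_atTop.const_mul
        (∫ u in (1 : ℝ)..X₀, 1 / f u))
  have htail := tendsto_integral_indicator_div hf_cont hf_pos hf_rv hX₀ (by linarith) hP
  rw [integral_Ioc_zero_one_rpow_neg hβ] at htail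
  refine (zero_add (1 - β)⁻¹ ▸ hhead.add htail).congr' ?_
  filter_upwards [eventually_ge_atTop X₀] with x hx
  rw [← integral_one_div_mul_div_eq_integral_indicator f hX₀ hx, ← add_div, ← add_mul,
    intervalIntegral.integral_add_adjacent_intervals (hint one_pos hX₀)
      (hint hX₀ (hX₀.trans_le hx))]

lemma of_tendsto_mul_div {F : ℝ → ℝ} {c : ℝ} (hf_rv : RegVary f β) (hc : c ≠ 0)
    (hF : Tendsto (fun x => F x * f x / x) atTop (𝓝 c)) : RegVary F (1 - β) := by
  intro l hl
  have hlβ : l ^ β ≠ 0 := (Real.rpow_pos_of_pos hl β).ne'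
  have hlim := ((hF.comp (tendsto_id.const_mul_atTop hl)).div hF hc).mul
    (((hf_rv l hl).inv₀ hlβ).const_mul l)
  have hexp : l * l ^ (-β) = l ^ (1 - β) := by
    rw [sub_eq_add_neg, Real.rpow_add hl, Real.rpow_one]
  rw [div_self hc, one_mul, ← Real.rpow_neg hl.le, hexp] at hlim
  refine hlim.congr' ?_
  filter_upwards [hF.eventually_ne hc, (hf_rv l hl).eventually_ne hlβ] with x hx hlx
  simp only [ne_eq, div_eq_zero_iff, mul_eq_zero, not_or] at hx hlx
  obtain ⟨⟨hFx, hfx⟩, hx₀⟩ := hx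
  simp only [Function.comp_apply, Pi.div_apply, id]
  field_simp [hlx.1]

end RegVary

theorem karamata_F_general (f : ℝ → ℝ) (β : ℝ) (hβ1 : β < 1)
    (hf_cont : ContinuousOn f (Set.Ioi 0)) (hf_pos : ∀ x > (0:ℝ), 0 < f x)
    (hf_rv : RegVary f β) :
    let F : ℝ → ℝ := fun x => ∫ u in (1:ℝ)..x, 1 / f u
    Filter.Tendsto (fun x => F x / (x / ((1 - β) * f x))) Filter.atTop (nhds 1) ∧
    RegVary F (1 - β) ∧
    Filter.Tendsto F Filter.atTop Filter.atTop := by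
  intro F
  have hβ : 0 < 1 - β := sub_pos.2 hβ1
  have hlim : Tendsto (fun x => F x * f x / x) atTop (𝓝 (1 - β)⁻¹) :=
    hf_rv.tendsto_integral_one_div_mul_div hβ1 hf_cont hf_pos
  refine ⟨?_, hf_rv.of_tendsto_mul_div (inv_ne_zero hβ.ne') hlim, ?_⟩
  · refine (mul_inv_cancel₀ hβ.ne' ▸ hlim.const_mul (1 - β)).congr fun x => ?_
    rw [div_div_eq_mul_div]
    ring
  · refine (hlim.pos_mul_atTop (inv_pos.2 hβ)
      (hf_rv.tendsto_div_atTop hβ1 hf_cont hf_pos)).congr' ?_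
    filter_upwards [eventually_gt_atTop 0] with x hx
    have := hf_pos x hx
    field_simp

theorem karamata_F (f : ℝ → ℝ) (β : ℝ) (hβ0 : 0 ≤ β) (hβ1 : β < 1)
    (hf_cont : ContinuousOn f (Set.Ioi 0)) (hf_pos : ∀ x > (0:ℝ), 0 < f x)
    (hf_rv : RegVary f β) :
    let F : ℝ → ℝ := fun x => ∫ u in (1:ℝ)..x, 1 / f u
    Filter.Tendsto (fun x => F x / (x / ((1 - β) * f x))) Filter.atTop (nhds 1) ∧
    RegVary F (1 - β) ∧
    Filter.Tendsto F Filter.atTop Filter.atTop :=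
  karamata_F_general f β hβ1 hf_cont hf_pos hf_rv
end

section
/- Let ℓ(x) = (a·log log(x^α))^{1/(1−β)} for large x, where a > 0, α > 0, β ∈ [0,1). Then ℓ(x·ℓ(x))/ℓ(x) → 1 as x → ∞. -/
/-!
Since `ℓ` is a power of `log log x`, `log ℓ(x) = o(log x)`. Hence `log (x ℓ(x)) ~ log x`, an
asymptotic equivalence that survives a further logarithm (its arguments tend to infinity) and
the power defining `ℓ`.
-/

open Filter Asymptotics Real Topology

theorem Asymptotics.IsEquivalent.tendsto_rpow_div_rpow {ι : Type*} {l : Filter ι} {u v : ι → ℝ}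
    (huv : u ~[l] v) (hv : ∀ᶠ x in l, 0 < v x) (r : ℝ) :
    Tendsto (fun x => u x ^ r / v x ^ r) l (𝓝 1) := by
  have hdiv : Tendsto (u / v) l (𝓝 1) :=
    (isEquivalent_iff_tendsto_one (hv.mono fun _ h => h.ne')).mp huv
  have hdiv_pos : ∀ᶠ x in l, 0 < u x / v x := hdiv.eventually (eventually_gt_nhds one_pos)
  have hpow : Tendsto (fun x => (u x / v x) ^ r) l (𝓝 1) := by
    simpa using hdiv.rpow_const (p := r) (Or.inl one_ne_zero)
  refine hpow.congr' ?_
  filter_upwards [hv, hdiv_pos] with x hvx hdivx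
  have hux : 0 < u x := (div_pos_iff_of_pos_right hvx).mp hdivx
  exact div_rpow hux.le hvx.le r

theorem Real.log_rpow_eventuallyEq_atTop (α : ℝ) :
    (fun x => log (x ^ α)) =ᶠ[atTop] fun x => α * log x := by
  filter_upwards [eventually_gt_atTop 0] with x hx
  exact log_rpow hx α

theorem Real.tendsto_log_rpow_atTop {α : ℝ} (hα : 0 < α) :
    Tendsto (fun x => log (x ^ α)) atTop atTop :=
  (tendsto_log_atTop.const_mul_atTop hα).congr' (log_rpow_eventuallyEq_atTop α).symm

theorem Real.isEquivalent_log_mul_of_isLittleO {g : ℝ → ℝ} (hg : ∀ᶠ x in atTop, 0 < g x)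
    (hlog : (fun x => log (g x)) =o[atTop] log) :
    (fun x => log (x * g x)) ~[atTop] log := by
  refine IsLittleO.isEquivalent (hlog.congr' ?_ EventuallyEq.rfl)
  filter_upwards [hg, eventually_gt_atTop 0] with x hgx hx
  simp [log_mul hx.ne' hgx.ne']

theorem Real.isEquivalent_log_log_rpow_mul {α : ℝ} (hα : 0 < α) {g : ℝ → ℝ}
    (hg : ∀ᶠ x in atTop, 0 < g x) (hlog : (fun x => log (g x)) =o[atTop] log) :
    (fun x => log (log ((x * g x) ^ α))) ~[atTop] fun x => log (log (x ^ α)) := by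
  have hmul : (fun x => α * log (x * g x)) ~[atTop] fun x => α * log x :=
    IsEquivalent.refl.mul (isEquivalent_log_mul_of_isLittleO hg hlog)
  have hrpow : (fun x => log ((x * g x) ^ α)) ~[atTop] fun x => log (x ^ α) := by
    refine (hmul.congr_left ?_).congr_right (log_rpow_eventuallyEq_atTop α).symm
    filter_upwards [hg, eventually_gt_atTop 0] with x hgx hx
    exact (log_rpow (mul_pos hx hgx) α).symm
  exact hrpow.log (tendsto_log_rpow_atTop hα)

theorem Real.isLittleO_log_rpow_const_mul_log {ι : Type*} {l : Filter ι} {f g : ι → ℝ}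
    (hf : Tendsto f l atTop) (hfg : f =O[l] g) {a : ℝ} (ha : 0 < a) (r : ℝ) :
    (fun x => log ((a * log (f x)) ^ r)) =o[l] g := by
  have haf : Tendsto (fun x => a * log (f x)) l atTop :=
    (tendsto_log_atTop.comp hf).const_mul_atTop ha
  have hlog : (fun x => log (a * log (f x))) =o[l] g :=
    calc (fun x => log (a * log (f x)))
        _ =o[l] fun x => a * log (f x) := isLittleO_log_id_atTop.comp_tendsto haf
        _ =O[l] fun x => log (f x) := isBigO_const_mul_self a _ l
        _ =o[l] f := isLittleO_log_id_atTop.comp_tendsto hf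
        _ =O[l] g := hfg
  refine (hlog.const_mul_left r).congr' ?_ EventuallyEq.rfl
  filter_upwards [haf.eventually_gt_atTop 0] with x hx
  exact (log_rpow hx r).symm

theorem ell_loglog_self_neglecting_general (a α β : ℝ) (ha : 0 < a) (hα : 0 < α) :
    let ell : ℝ → ℝ := fun x => (a * Real.log (Real.log (x ^ α))) ^ ((1:ℝ) / (1 - β))
    Filter.Tendsto (fun x => ell (x * ell x) / ell x) Filter.atTop (nhds 1) := by
  intro ell
  have hbase : Tendsto (fun x => a * log (log (x ^ α))) atTop atTop :=
    (tendsto_log_atTop.comp (tendsto_log_rpow_atTop hα)).const_mul_atTop ha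
  have hell_pos : ∀ᶠ x in atTop, 0 < ell x :=
    (hbase.eventually_gt_atTop 0).mono fun x hx => rpow_pos_of_pos hx _
  have hlog_ell : (fun x => log (ell x)) =o[atTop] log :=
    isLittleO_log_rpow_const_mul_log (tendsto_log_rpow_atTop hα)
      ((isBigO_const_mul_self α log atTop).congr' (log_rpow_eventuallyEq_atTop α).symm
        EventuallyEq.rfl) ha _
  have hequiv : (fun x => a * log (log ((x * ell x) ^ α))) ~[atTop]
      fun x => a * log (log (x ^ α)) :=
    IsEquivalent.refl.mul (isEquivalent_log_log_rpow_mul hα hell_pos hlog_ell)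
  exact hequiv.tendsto_rpow_div_rpow (hbase.eventually_gt_atTop 0) _

theorem ell_loglog_self_neglecting (a α β : ℝ) (ha : 0 < a) (hα : 0 < α)
    (hβ0 : 0 ≤ β) (hβ1 : β < 1) :
    let ell : ℝ → ℝ := fun x => (a * Real.log (Real.log (x ^ α))) ^ ((1:ℝ) / (1 - β))
    Filter.Tendsto (fun x => ell (x * ell x) / ell x) Filter.atTop (nhds 1) :=
  ell_loglog_self_neglecting_general a α β ha hα
end
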